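/- arXiv:2404.00637 — 4 statements merged into one kernel-verified Lean document; each statement's English description precedes it below -/
import Mathlib

section
/- For positive semidefinite matrices A, B and a parameter t with 0 < t < 1, Tr[(A^{(1-t)/(2t)} B A^{(1-t)/(2t)})^t] ≤ Tr[(1-t)A + tB]. -/
open Matrix ComplexOrder Kronecker

/-- Real power of a matrix via functional calculus (eigendecomposition) on
Hermitian matrices; junk value `0` otherwise. -/
noncomputable def mrpow {n : Type*} [Fintype n] [DecidableEq n]
    (A : Matrix n n ℂ) (r : ℝ) : Matrix n n ℂ :=
  if h : A.IsHermitian then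
    (h.eigenvectorUnitary : Matrix n n ℂ) *
      Matrix.diagonal ((fun i => (((h.eigenvalues i : ℝ) ^ r : ℝ) : ℂ)) : n → ℂ) *
      star (h.eigenvectorUnitary : Matrix n n ℂ)
  else 0

/-- Entrywise complex conjugate of a matrix. -/
def conjM {n : Type*} [Fintype n] [DecidableEq n] (A : Matrix n n ℂ) : Matrix n n ℂ :=
  A.map (starRingEnd ℂ)

/-- The quantity `f_{α,z}(ρ,σ) = Tr[(σ^{(1-α)/(2z)} ρ^{α/z} σ^{(1-α)/(2z)})^z]`. -/
noncomputable def fRenyi {n : Type*} [Fintype n] [DecidableEq n]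
    (α z : ℝ) (ρ σ : Matrix n n ℂ) : ℂ :=
  (mrpow (mrpow σ ((1 - α) / (2 * z)) * mrpow ρ (α / z) * mrpow σ ((1 - α) / (2 * z))) z).trace

/-- The weighted matrix geometric mean `A ♯_λ B = A^{1/2} (A^{-1/2} B A^{-1/2})^λ A^{1/2}`. -/
noncomputable def geomMean {n : Type*} [Fintype n] [DecidableEq n]
    (A B : Matrix n n ℂ) (l : ℝ) : Matrix n n ℂ :=
  mrpow A (1/2) * mrpow (mrpow A (-(1/2)) * B * mrpow A (-(1/2))) l * mrpow A (1/2)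

section Aux
variable {n : Type*} [Fintype n] [DecidableEq n]

lemma trace_conj (U D : Matrix n n ℂ) (hU : star U * U = 1) :
    (U * D * star U).trace = D.trace := by
  rw [Matrix.trace_mul_cycle, hU, Matrix.one_mul]

lemma trace_diag_mul (d e : n → ℂ) (W : Matrix n n ℂ) :
    (Matrix.diagonal d * W * Matrix.diagonal e * star W).trace
      = ∑ i, ∑ j, d i * e j * (W i j * star (W i j)) := by
  have h1 : ∀ i j, (Matrix.diagonal d * W * Matrix.diagonal e) i j = d i * W i j * e j := by
    intro i j; rw [Matrix.mul_diagonal, Matrix.diagonal_mul]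
  rw [Matrix.trace]
  simp only [Matrix.diag, Matrix.mul_apply, h1, Matrix.star_eq_conjTranspose,
    Matrix.conjTranspose_apply]
  exact Finset.sum_congr rfl fun i _ => Finset.sum_congr rfl fun j _ => by ring

lemma trace_two (U V : Matrix n n ℂ) (hU : star U * U = 1) (hU2 : U * star U = 1)
    (d e : n → ℂ) :
    ((U * Matrix.diagonal d * star U) * (V * Matrix.diagonal e * star V)).trace
      = ∑ i, ∑ j, d i * e j * ((star U * V) i j * star ((star U * V) i j)) := by
  have h1 : (U * Matrix.diagonal d * star U) * (V * Matrix.diagonal e * star V)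
      = U * (Matrix.diagonal d * (star U * V) * Matrix.diagonal e * star (star U * V))
        * star U := by
    simp only [Matrix.star_mul, star_star, Matrix.mul_assoc]
    rw [hU2, Matrix.mul_one]
  rw [h1, trace_conj _ _ hU, trace_diag_mul]

lemma scalar_ineq (t x y : ℝ) (ht0 : 0 < t) (ht1 : t < 1) (hx : 0 ≤ x) (hy : 0 < y) :
    x ^ t ≤ (1 - t) * y + t * (x * y ^ ((t - 1) / t)) := by
  set z : ℝ := y ^ (1 / t) with hzdef
  have hz : 0 < z := Real.rpow_pos_of_pos hy _
  have hzt : z ^ t = y := by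
    rw [hzdef, ← Real.rpow_mul hy.le, one_div_mul_cancel ht0.ne', Real.rpow_one]
  have hzt1 : z ^ (t - 1) = y ^ ((t - 1) / t) := by
    rw [hzdef, ← Real.rpow_mul hy.le]
    congr 1
    field_simp
  have key : (x / z) ^ t * 1 ^ (1 - t) ≤ t * (x / z) + (1 - t) * 1 :=
    Real.geom_mean_le_arith_mean2_weighted ht0.le (by linarith)
      (div_nonneg hx hz.le) zero_le_one (by ring)
  rw [Real.one_rpow, mul_one, mul_one] at key
  have hm := mul_le_mul_of_nonneg_left key (Real.rpow_nonneg hz.le t : (0:ℝ) ≤ z ^ t)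
  calc x ^ t = z ^ t * (x / z) ^ t := by
        rw [Real.div_rpow hx hz.le, mul_div_cancel₀]
        exact (Real.rpow_pos_of_pos hz t).ne'
    _ ≤ z ^ t * (t * (x / z) + (1 - t)) := hm
    _ = (1 - t) * y + t * (x * y ^ ((t - 1) / t)) := by
        rw [← hzt1, ← hzt, mul_add]
        have h2 : z ^ t * (t * (x / z)) = t * (x * z ^ (t - 1)) := by
          rw [Real.rpow_sub hz, Real.rpow_one]
          field_simp
        rw [h2]; ring

end Aux

theorem stmt0 {n : Type*} [Fintype n] [DecidableEq n] (A B : Matrix n n ℂ)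
    (hA : A.PosSemidef) (hB : B.PosSemidef) (t : ℝ) (ht0 : 0 < t) (ht1 : t < 1) :
    (mrpow (mrpow A ((1 - t) / (2 * t)) * B * mrpow A ((1 - t) / (2 * t))) t).trace ≤
      (((1 - t : ℝ) : ℂ) • A + ((t : ℝ) : ℂ) • B).trace := by
  set c : ℝ := (1 - t) / (2 * t) with hcdef
  have hc : 0 < c := div_pos (by linarith) (by linarith)
  set e : ℝ := (t - 1) / t with hedef
  have hAh : A.IsHermitian := hA.1
  set V : Matrix n n ℂ := (hAh.eigenvectorUnitary : Matrix n n ℂ) with hVdef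
  set a : n → ℝ := hAh.eigenvalues with hadef
  have ha : ∀ j, 0 ≤ a j := hA.eigenvalues_nonneg
  have hVV : star V * V = 1 := Matrix.mem_unitaryGroup_iff'.mp hAh.eigenvectorUnitary.2
  have hVV' : V * star V = 1 := Matrix.mem_unitaryGroup_iff.mp hAh.eigenvectorUnitary.2
  have mrpowA : ∀ r : ℝ, mrpow A r
      = V * Matrix.diagonal (fun i => ((a i ^ r : ℝ) : ℂ)) * star V := by
    intro r; rw [mrpow, dif_pos hAh]
  have hAspec : A = V * Matrix.diagonal (fun i => ((a i : ℝ) : ℂ)) * star V := by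
    have := hAh.spectral_theorem
    rw [Unitary.conjStarAlgAut_apply] at this
    exact this
  -- conjugation helpers for V
  have hcancel : ∀ X : Matrix n n ℂ, star V * (V * X) = X := by
    intro X; rw [← Matrix.mul_assoc, hVV, Matrix.one_mul]
  have conjmul : ∀ d f : n → ℂ,
      (V * Matrix.diagonal d * star V) * (V * Matrix.diagonal f * star V)
        = V * Matrix.diagonal (fun i => d i * f i) * star V := by
    intro d f
    simp only [Matrix.mul_assoc]
    rw [hcancel, ← Matrix.mul_assoc (Matrix.diagonal d), Matrix.diagonal_mul_diagonal]
  have conjPSD : ∀ d : n → ℝ, (∀ i, 0 ≤ d i) →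
      (V * Matrix.diagonal (fun i => ((d i : ℝ) : ℂ)) * star V).PosSemidef := by
    intro d hd
    have h1 : (Matrix.diagonal (fun i => ((d i : ℝ) : ℂ))).PosSemidef :=
      Matrix.posSemidef_diagonal_iff.mpr fun i => Complex.zero_le_real.mpr (hd i)
    simpa [Matrix.star_eq_conjTranspose] using h1.mul_mul_conjTranspose_same V
  -- the matrix M
  set C : Matrix n n ℂ := mrpow A c with hCdef
  have hCspec : C = V * Matrix.diagonal (fun i => ((a i ^ c : ℝ) : ℂ)) * star V := mrpowA c
  have hCpsd : C.PosSemidef := hCspec ▸ conjPSD _ (fun i => Real.rpow_nonneg (ha i) c)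
  set M : Matrix n n ℂ := C * B * C with hMdef
  have hM : M.PosSemidef := by
    have h1 := hB.mul_mul_conjTranspose_same C
    rwa [hCpsd.1.eq] at h1
  have hMh : M.IsHermitian := hM.1
  set U : Matrix n n ℂ := (hMh.eigenvectorUnitary : Matrix n n ℂ) with hUdef
  set μ : n → ℝ := hMh.eigenvalues with hmudef
  have hμ : ∀ i, 0 ≤ μ i := hM.eigenvalues_nonneg
  have hUU : star U * U = 1 := Matrix.mem_unitaryGroup_iff'.mp hMh.eigenvectorUnitary.2
  have hUU' : U * star U = 1 := Matrix.mem_unitaryGroup_iff.mp hMh.eigenvectorUnitary.2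
  have hMspec : M = U * Matrix.diagonal (fun i => ((μ i : ℝ) : ℂ)) * star U := by
    have := hMh.spectral_theorem
    rw [Unitary.conjStarAlgAut_apply] at this
    exact this
  set W : Matrix n n ℂ := star U * V with hWdef
  set p : n → n → ℝ := fun i j => Complex.normSq (W i j) with hpdef
  have hp0 : ∀ i j, 0 ≤ p i j := fun i j => Complex.normSq_nonneg _
  have hWW : W * star W = 1 := by
    rw [hWdef, Matrix.star_mul, star_star, Matrix.mul_assoc, ← Matrix.mul_assoc V, hVV',
      Matrix.one_mul, hUU]
  have hWW' : star W * W = 1 := by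
    rw [hWdef, Matrix.star_mul, star_star, Matrix.mul_assoc, ← Matrix.mul_assoc U, hUU',
      Matrix.one_mul, hVV]
  have rowsum : ∀ i, ∑ j, p i j = 1 := by
    intro i
    have h1 : (W * star W) i i = 1 := by rw [hWW, Matrix.one_apply_eq]
    rw [Matrix.mul_apply] at h1
    have h2 : ∑ j, ((p i j : ℝ) : ℂ) = 1 := by
      rw [← h1]
      refine Finset.sum_congr rfl fun j _ => ?_
      rw [Matrix.star_eq_conjTranspose, Matrix.conjTranspose_apply, hpdef]
      exact (Complex.mul_conj _).symm
    exact_mod_cast h2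
  have colsum : ∀ j, ∑ i, p i j = 1 := by
    intro j
    have h1 : (star W * W) j j = 1 := by rw [hWW', Matrix.one_apply_eq]
    rw [Matrix.mul_apply] at h1
    have h2 : ∑ i, ((p i j : ℝ) : ℂ) = 1 := by
      rw [← h1]
      refine Finset.sum_congr rfl fun i _ => ?_
      rw [Matrix.star_eq_conjTranspose, Matrix.conjTranspose_apply, hpdef]
      exact Complex.normSq_eq_conj_mul_self
    exact_mod_cast h2
  -- kernel lemma
  have hdiagW : Matrix.diagonal (fun i => ((μ i : ℝ) : ℂ)) * W
      = (star U * (C * B) * V) * Matrix.diagonal (fun j => ((a j ^ c : ℝ) : ℂ)) := by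
    have e1 : star U * M = Matrix.diagonal (fun i => ((μ i : ℝ) : ℂ)) * star U := by
      conv_lhs => rw [hMspec]
      rw [← Matrix.mul_assoc, ← Matrix.mul_assoc, hUU, Matrix.one_mul]
    have e2 : C * V = V * Matrix.diagonal (fun i => ((a i ^ c : ℝ) : ℂ)) := by
      rw [hCspec, Matrix.mul_assoc, hVV, Matrix.mul_one]
    calc Matrix.diagonal (fun i => ((μ i : ℝ) : ℂ)) * W
        = (star U * M) * V := by rw [e1, hWdef, Matrix.mul_assoc]
      _ = star U * (C * B) * (C * V) := by
          rw [hMdef]; simp only [Matrix.mul_assoc]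
      _ = (star U * (C * B) * V) * Matrix.diagonal (fun j => ((a j ^ c : ℝ) : ℂ)) := by
          rw [e2]; simp only [Matrix.mul_assoc]
  have hkey : ∀ i j, a j = 0 → ((μ i : ℝ) : ℂ) * W i j = 0 := by
    intro i j haj
    have h1 := Matrix.ext_iff.mpr hdiagW i j
    rw [Matrix.diagonal_mul, Matrix.mul_diagonal] at h1
    rw [h1, haj, Real.zero_rpow hc.ne', Complex.ofReal_zero, mul_zero]
  -- termwise inequality
  have term : ∀ i j, p i j * (μ i ^ t) ≤ p i j * ((1 - t) * a j + t * (μ i * a j ^ e)) := by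
    intro i j
    rcases (ha j).eq_or_lt with haj | haj
    · rcases mul_eq_zero.mp (hkey i j haj.symm) with h | h
      · have hμ0 : μ i = 0 := by exact_mod_cast h
        rw [hμ0, Real.zero_rpow ht0.ne', ← haj]
        simp
      · have hpij : p i j = 0 := by rw [hpdef]; simp [h]
        rw [hpij, zero_mul, zero_mul]
    · exact mul_le_mul_of_nonneg_left (scalar_ineq t (μ i) (a j) ht0 ht1 (hμ i) haj) (hp0 i j)
  -- real sums
  set T : ℝ := ∑ i, ∑ j, p i j * (μ i * a j ^ e) with hTdef
  have sum1 : ∑ i, μ i ^ t = ∑ i, ∑ j, p i j * μ i ^ t := by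
    refine Finset.sum_congr rfl fun i _ => ?_
    rw [← Finset.sum_mul, rowsum i, one_mul]
  have sumA : ∑ i, ∑ j, p i j * a j = ∑ j, a j := by
    rw [Finset.sum_comm]
    refine Finset.sum_congr rfl fun j _ => ?_
    rw [← Finset.sum_mul, colsum j, one_mul]
  have chain1 : ∑ i, μ i ^ t ≤ (1 - t) * (∑ j, a j) + t * T := by
    rw [sum1]
    calc ∑ i, ∑ j, p i j * μ i ^ t
        ≤ ∑ i, ∑ j, p i j * ((1 - t) * a j + t * (μ i * a j ^ e)) :=
          Finset.sum_le_sum fun i _ => Finset.sum_le_sum fun j _ => term i j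
      _ = (1 - t) * (∑ i, ∑ j, p i j * a j) + t * T := by
          rw [hTdef, Finset.mul_sum, Finset.mul_sum, ← Finset.sum_add_distrib]
          refine Finset.sum_congr rfl fun i _ => ?_
          rw [Finset.mul_sum, Finset.mul_sum, ← Finset.sum_add_distrib]
          exact Finset.sum_congr rfl fun j _ => by ring
      _ = (1 - t) * (∑ j, a j) + t * T := by rw [sumA]
  -- eigen data of B
  have hBh : B.IsHermitian := hB.1
  set VB : Matrix n n ℂ := (hBh.eigenvectorUnitary : Matrix n n ℂ) with hVBdef
  set b : n → ℝ := hBh.eigenvalues with hbdef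
  have hb : ∀ k, 0 ≤ b k := hB.eigenvalues_nonneg
  have hVBVB : star VB * VB = 1 := Matrix.mem_unitaryGroup_iff'.mp hBh.eigenvectorUnitary.2
  have hVBVB' : VB * star VB = 1 := Matrix.mem_unitaryGroup_iff.mp hBh.eigenvectorUnitary.2
  have hBspec : B = VB * Matrix.diagonal (fun k => ((b k : ℝ) : ℂ)) * star VB := by
    have := hBh.spectral_theorem
    rw [Unitary.conjStarAlgAut_apply] at this
    exact this
  set W2 : Matrix n n ℂ := star VB * V with hW2def
  have hW2W2 : W2 * star W2 = 1 := by
    rw [hW2def, Matrix.star_mul, star_star, Matrix.mul_assoc, ← Matrix.mul_assoc V, hVV',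
      Matrix.one_mul, hVBVB]
  have rowsumB : ∀ k, ∑ j, Complex.normSq (W2 k j) = 1 := by
    intro k
    have h1 : (W2 * star W2) k k = 1 := by rw [hW2W2, Matrix.one_apply_eq]
    rw [Matrix.mul_apply] at h1
    have h2 : ∑ j, ((Complex.normSq (W2 k j) : ℝ) : ℂ) = 1 := by
      rw [← h1]
      refine Finset.sum_congr rfl fun j _ => ?_
      rw [Matrix.star_eq_conjTranspose, Matrix.conjTranspose_apply]
      exact (Complex.mul_conj _).symm
    exact_mod_cast h2
  -- the matrix Q
  set q : n → ℝ := fun j => a j ^ c * a j ^ e * a j ^ c with hqdef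
  have hq0 : ∀ j, 0 ≤ q j := fun j =>
    mul_nonneg (mul_nonneg (Real.rpow_nonneg (ha j) c) (Real.rpow_nonneg (ha j) e))
      (Real.rpow_nonneg (ha j) c)
  have hq1 : ∀ j, q j ≤ 1 := by
    intro j
    rcases (ha j).eq_or_lt with haj | haj
    · simp only [hqdef, ← haj, Real.zero_rpow hc.ne']
      norm_num
    · have h3 : q j = a j ^ (c + e + c) := by
        rw [hqdef, Real.rpow_add haj, Real.rpow_add haj]
      have h4 : c + e + c = 0 := by
        rw [hcdef, hedef]; field_simp; ring
      rw [h3, h4, Real.rpow_zero]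
  have hQspec : C * mrpow A e * C
      = V * Matrix.diagonal (fun j => ((q j : ℝ) : ℂ)) * star V := by
    rw [hCspec, mrpowA e, conjmul, conjmul]
    congr 2
    funext j
    rw [hqdef]
    push_cast
    ring
  -- trace identities
  have tA : A.trace = ((∑ j, a j : ℝ) : ℂ) := by
    conv_lhs => rw [hAspec]
    rw [trace_conj _ _ hVV, Matrix.trace_diagonal]
    norm_cast
  have tB : B.trace = ((∑ k, b k : ℝ) : ℂ) := by
    conv_lhs => rw [hBspec]
    rw [trace_conj _ _ hVBVB, Matrix.trace_diagonal]
    norm_cast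
  have tLHS : (mrpow M t).trace = ((∑ i, μ i ^ t : ℝ) : ℂ) := by
    rw [mrpow, dif_pos hMh, trace_conj _ _ hUU, Matrix.trace_diagonal]
    norm_cast
  have tMN : (M * mrpow A e).trace = ((T : ℝ) : ℂ) := by
    conv_lhs => rw [hMspec, mrpowA e]
    rw [trace_two U V hUU hUU' _ _, ← hWdef, hTdef]
    push_cast
    refine Finset.sum_congr rfl fun i _ => Finset.sum_congr rfl fun j _ => ?_
    have h5 : W i j * star (W i j) = ((p i j : ℝ) : ℂ) := by
      rw [hpdef]; exact Complex.mul_conj _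
    rw [h5]
    ring
  have tcyc : (M * mrpow A e).trace = (B * (C * mrpow A e * C)).trace := by
    rw [hMdef,
      show C * B * C * mrpow A e = (C * B) * (C * mrpow A e) by simp only [Matrix.mul_assoc],
      Matrix.trace_mul_comm,
      show (C * mrpow A e) * (C * B) = ((C * mrpow A e) * C) * B by simp only [Matrix.mul_assoc],
      Matrix.trace_mul_comm]
  have tBQ : (B * (C * mrpow A e * C)).trace
      = ((∑ k, ∑ j, b k * q j * Complex.normSq (W2 k j) : ℝ) : ℂ) := by
    rw [hQspec]
    conv_lhs => rw [hBspec]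
    rw [trace_two VB V hVBVB hVBVB' _ _, ← hW2def]
    push_cast
    refine Finset.sum_congr rfl fun k _ => Finset.sum_congr rfl fun j _ => ?_
    have h5 : W2 k j * star (W2 k j) = ((Complex.normSq (W2 k j) : ℝ) : ℂ) :=
      Complex.mul_conj _
    rw [h5]
  have hT2 : T = ∑ k, ∑ j, b k * q j * Complex.normSq (W2 k j) := by
    have h6 := tMN.symm.trans (tcyc.trans tBQ)
    exact_mod_cast h6
  have hTle : T ≤ ∑ k, b k := by
    rw [hT2]
    calc ∑ k, ∑ j, b k * q j * Complex.normSq (W2 k j)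
        ≤ ∑ k, ∑ j, b k * Complex.normSq (W2 k j) := by
          refine Finset.sum_le_sum fun k _ => Finset.sum_le_sum fun j _ => ?_
          have h8 := mul_le_mul_of_nonneg_right
            (mul_le_mul_of_nonneg_left (hq1 j) (hb k)) (Complex.normSq_nonneg (W2 k j))
          simpa using h8
      _ = ∑ k, b k := by
          refine Finset.sum_congr rfl fun k _ => ?_
          rw [← Finset.mul_sum, rowsumB k, mul_one]
  -- conclusion
  have RHS : (((1 - t : ℝ) : ℂ) • A + ((t : ℝ) : ℂ) • B).trace
      = (((1 - t) * (∑ j, a j) + t * (∑ k, b k) : ℝ) : ℂ) := by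
    rw [Matrix.trace_add, Matrix.trace_smul, Matrix.trace_smul, tA, tB, smul_eq_mul,
      smul_eq_mul]
    push_cast
    ring
  rw [RHS, tLHS]
  have final : ∑ i, μ i ^ t ≤ (1 - t) * (∑ j, a j) + t * (∑ k, b k) := by
    refine chain1.trans ?_
    have h7 := mul_le_mul_of_nonneg_left hTle ht0.le
    linarith
  exact Complex.real_le_real.mpr final
end

section
/- For any density matrix ρ and parameters α, z with 0 < max{α, 1-α} ≤ z < 1, the quantity f_{α,z}(ρ, ρ*) = Tr[((ρ*)^{(1-α)/(2z)} ρ^{α/z} (ρ*)^{(1-α)/(2z)})^z] satisfies f_{α,z}(ρ, ρ*) ≤ 1, where ρ* denotes the entrywise complex conjugate of ρ. -/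
open Matrix ComplexOrder Kronecker

namespace RenyiAux

variable {n : Type*} [Fintype n] [DecidableEq n]

lemma trConj (W : Matrix n n ℂ) (hW : Wᴴ * W = 1) (X : Matrix n n ℂ) :
    (W * X * Wᴴ).trace = X.trace := by
  rw [Matrix.trace_mul_cycle, hW, Matrix.one_mul]

lemma tr2 (P : Matrix n n ℂ) (d e : n → ℝ) :
    (Matrix.diagonal (fun i => (d i : ℂ)) * P * Matrix.diagonal (fun j => (e j : ℂ)) * Pᴴ).trace
      = ((∑ i, ∑ j, d i * e j * Complex.normSq (P i j) : ℝ) : ℂ) := by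
  have key : ∀ i j : n,
      (Matrix.diagonal (fun i => (d i : ℂ)) * P * Matrix.diagonal (fun j => (e j : ℂ))) i j
        * Pᴴ j i = ((d i * e j * Complex.normSq (P i j) : ℝ) : ℂ) := by
    intro i j
    simp only [Matrix.mul_diagonal, Matrix.diagonal_mul, Matrix.conjTranspose_apply]
    push_cast
    rw [← Complex.mul_conj]
    simp [Complex.star_def]
    ring
  rw [Matrix.trace]
  push_cast
  refine Finset.sum_congr rfl fun i _ => ?_
  rw [Matrix.diag_apply, Matrix.mul_apply]
  refine Finset.sum_congr rfl fun j _ => ?_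
  rw [key i j]
  push_cast
  ring

lemma diag_entry (P : Matrix n n ℂ) (d : n → ℝ) (j : n) :
    (Pᴴ * Matrix.diagonal (fun i => (d i : ℂ)) * P) j j
      = ((∑ i, d i * Complex.normSq (P i j) : ℝ) : ℂ) := by
  rw [Matrix.mul_apply]
  push_cast
  refine Finset.sum_congr rfl fun i _ => ?_
  simp only [Matrix.mul_diagonal, Matrix.conjTranspose_apply]
  rw [← Complex.mul_conj]
  simp [Complex.star_def]
  ring

lemma row_sum {P : Matrix n n ℂ} (h : P * Pᴴ = 1) (i : n) :
    ∑ j, Complex.normSq (P i j) = 1 := by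
  have h2 : (P * Pᴴ) i i = 1 := by rw [h, Matrix.one_apply_eq]
  rw [Matrix.mul_apply] at h2
  have : ((∑ j, Complex.normSq (P i j) : ℝ) : ℂ) = ((1 : ℝ) : ℂ) := by
    push_cast
    rw [← h2]
    refine Finset.sum_congr rfl fun j _ => ?_
    rw [Matrix.conjTranspose_apply, ← Complex.mul_conj]
    simp [Complex.star_def]
  exact_mod_cast this

lemma col_sum {P : Matrix n n ℂ} (h : Pᴴ * P = 1) (j : n) :
    ∑ i, Complex.normSq (P i j) = 1 := by
  have h2 : (Pᴴ * P) j j = 1 := by rw [h, Matrix.one_apply_eq]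
  rw [Matrix.mul_apply] at h2
  have : ((∑ i, Complex.normSq (P i j) : ℝ) : ℂ) = ((1 : ℝ) : ℂ) := by
    push_cast
    rw [← h2]
    refine Finset.sum_congr rfl fun i _ => ?_
    rw [Matrix.conjTranspose_apply, ← Complex.mul_conj]
    simp [Complex.star_def]
    ring
  exact_mod_cast this

lemma mrpow_eq {A : Matrix n n ℂ} (hA : A.IsHermitian) (r : ℝ) :
    mrpow A r = (hA.eigenvectorUnitary : Matrix n n ℂ) *
      Matrix.diagonal (fun i => ((hA.eigenvalues i ^ r : ℝ) : ℂ)) *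
      (hA.eigenvectorUnitary : Matrix n n ℂ)ᴴ := by
  rw [mrpow, dif_pos hA, Matrix.star_eq_conjTranspose]

lemma unit_mul_star {U : Matrix.unitaryGroup n ℂ} :
    (U : Matrix n n ℂ) * (U : Matrix n n ℂ)ᴴ = 1 := by
  rw [← Matrix.star_eq_conjTranspose]
  exact Matrix.mem_unitaryGroup_iff.mp U.2

lemma star_mul_unit {U : Matrix.unitaryGroup n ℂ} :
    (U : Matrix n n ℂ)ᴴ * (U : Matrix n n ℂ) = 1 := by
  rw [← Matrix.star_eq_conjTranspose]
  exact Matrix.mem_unitaryGroup_iff'.mp U.2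

lemma mrpow_posSemidef {A : Matrix n n ℂ} (hA : A.PosSemidef) (r : ℝ) :
    (mrpow A r).PosSemidef := by
  rw [mrpow_eq hA.1]
  apply Matrix.PosSemidef.mul_mul_conjTranspose_same
  refine Matrix.posSemidef_diagonal_iff.mpr fun i => ?_
  rw [Complex.zero_le_real]
  exact Real.rpow_nonneg (hA.eigenvalues_nonneg i) r

lemma spectral' {A : Matrix n n ℂ} (hA : A.IsHermitian) :
    A = (hA.eigenvectorUnitary : Matrix n n ℂ) *
      Matrix.diagonal (fun i => ((hA.eigenvalues i : ℝ) : ℂ)) *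
      (hA.eigenvectorUnitary : Matrix n n ℂ)ᴴ := by
  conv_lhs => rw [hA.spectral_theorem]
  rw [Unitary.conjStarAlgAut_apply, Matrix.star_eq_conjTranspose]
  rfl

lemma trace_eq_sum_eig {A : Matrix n n ℂ} (hA : A.IsHermitian) :
    A.trace = ((∑ i, hA.eigenvalues i : ℝ) : ℂ) := by
  conv_lhs => rw [spectral' hA]
  rw [trConj _ star_mul_unit, Matrix.trace_diagonal]
  push_cast
  rfl

lemma trace_mrpow {A : Matrix n n ℂ} (hA : A.IsHermitian) (r : ℝ) :
    (mrpow A r).trace = ((∑ i, hA.eigenvalues i ^ r : ℝ) : ℂ) := by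
  rw [mrpow_eq hA, trConj _ star_mul_unit, Matrix.trace_diagonal]
  push_cast
  rfl

lemma frame_trace (W V : Matrix n n ℂ) (hW1 : W * Wᴴ = 1) (hW2 : Wᴴ * W = 1)
    (d e : n → ℝ) :
    (W * Matrix.diagonal (fun i => (d i : ℂ)) * Wᴴ *
        (V * Matrix.diagonal (fun j => (e j : ℂ)) * Vᴴ)).trace
      = ((∑ i, ∑ j, d i * e j * Complex.normSq ((Wᴴ * V) i j) : ℝ) : ℂ) := by
  have h1 : W * Matrix.diagonal (fun i => (d i : ℂ)) * Wᴴ *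
      (V * Matrix.diagonal (fun j => (e j : ℂ)) * Vᴴ)
      = W * (Matrix.diagonal (fun i => (d i : ℂ)) * (Wᴴ * V) *
          Matrix.diagonal (fun j => (e j : ℂ)) * (Wᴴ * V)ᴴ) * Wᴴ := by
    rw [Matrix.conjTranspose_mul, Matrix.conjTranspose_conjTranspose]
    simp only [Matrix.mul_assoc, hW1, Matrix.mul_one]
  rw [h1, trConj _ hW2, tr2]

lemma UDU_mul (V : Matrix n n ℂ) (hV : Vᴴ * V = 1) (d e : n → ℂ) :
    (V * Matrix.diagonal d * Vᴴ) * (V * Matrix.diagonal e * Vᴴ)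
      = V * Matrix.diagonal (fun i => d i * e i) * Vᴴ := by
  have h1 : (V * Matrix.diagonal d * Vᴴ) * (V * Matrix.diagonal e * Vᴴ)
      = V * (Matrix.diagonal d * ((Vᴴ * V) * (Matrix.diagonal e * Vᴴ))) := by
    simp only [Matrix.mul_assoc]
  rw [h1, hV, Matrix.one_mul, ← Matrix.mul_assoc (Matrix.diagonal d),
    Matrix.diagonal_mul_diagonal, ← Matrix.mul_assoc]

lemma klein_scalar {a b z : ℝ} (hμ : 0 ≤ a) (hν : 0 < b) (hz0 : 0 < z) (hz1 : z < 1) :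
    a ^ z ≤ (1 - z) * b + z * (a * b ^ ((z - 1) / z)) := by
  set w := b ^ z⁻¹ with hw
  have hw0 : 0 < w := Real.rpow_pos_of_pos hν _
  have amgm := Real.geom_mean_le_arith_mean2_weighted (w₁ := z) (w₂ := 1 - z) (p₁ := a)
    (p₂ := w) hz0.le (by linarith) hμ hw0.le (by ring)
  have key := mul_le_mul_of_nonneg_right amgm (Real.rpow_nonneg hw0.le (z - 1))
  have l1 : a ^ z * w ^ (1 - z) * w ^ (z - 1) = a ^ z := by
    rw [mul_assoc, ← Real.rpow_add hw0]
    norm_num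
  have l2 : w ^ (z - 1) = b ^ ((z - 1) / z) := by
    rw [hw, ← Real.rpow_mul hν.le]
    congr 1
    field_simp
  have l3 : w * w ^ (z - 1) = b := by
    nth_rewrite 1 [← Real.rpow_one w]
    rw [← Real.rpow_add hw0, hw, ← Real.rpow_mul hν.le]
    rw [show z⁻¹ * (1 + (z - 1)) = 1 by field_simp; ring, Real.rpow_one]
  calc a ^ z = a ^ z * w ^ (1 - z) * w ^ (z - 1) := l1.symm
    _ ≤ (z * a + (1 - z) * w) * w ^ (z - 1) := key
    _ = z * (a * w ^ (z - 1)) + (1 - z) * (w * w ^ (z - 1)) := by ring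
    _ = (1 - z) * b + z * (a * b ^ ((z - 1) / z)) := by rw [l3, l2]; ring

end RenyiAux

open RenyiAux in
theorem stmt2 {n : Type*} [Fintype n] [DecidableEq n] (ρ : Matrix n n ℂ)
    (hρ : ρ.PosSemidef) (htr : ρ.trace = 1) (α z : ℝ)
    (h0 : 0 < max α (1 - α)) (hz : max α (1 - α) ≤ z) (hz1 : z < 1) :
    fRenyi α z ρ (conjM ρ) ≤ 1 := by
  have hz0 : 0 < z := lt_of_lt_of_le h0 hz
  have hα : α ≤ z := le_trans (le_max_left _ _) hz
  have h1α : 1 - α ≤ z := le_trans (le_max_right _ _) hz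
  have hα0 : 0 < α := by linarith
  have hα1 : α < 1 := by linarith
  simp only [fRenyi]
  set σ := conjM ρ with hσdef
  have hσT : σ = ρᵀ := by
    ext i j
    show (starRingEnd ℂ) (ρ i j) = ρ j i
    conv_rhs => rw [← hρ.1]
    rfl
  have hσ : σ.PosSemidef := by rw [hσT]; exact hρ.transpose
  have hσtr : σ.trace = 1 := by rw [hσT, Matrix.trace_transpose, htr]
  set p : ℝ := (1 - α) / (2 * z) with hp
  set q : ℝ := α / z with hq
  have hc0 : (z - 1) / z ≠ 0 := by
    refine div_ne_zero (by linarith) (by linarith)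
  have hp0 : 0 < p := div_pos (by linarith) (by linarith)
  have hq0 : 0 < q := div_pos hα0 hz0
  have hq1 : q ≤ 1 := (div_le_one hz0).mpr hα
  have hrr0 : 0 ≤ (z - α) / z := div_nonneg (by linarith) hz0.le
  have hqrr : q + (z - α) / z = 1 := by rw [hq]; field_simp; ring
  set B := mrpow σ p with hB
  set A' := mrpow ρ q with hA'
  have hBpsd : B.PosSemidef := mrpow_posSemidef hσ p
  have hApsd : A'.PosSemidef := mrpow_posSemidef hρ q
  set M := B * A' * B with hM
  have hMpsd : M.PosSemidef := by
    have h1 := hApsd.mul_mul_conjTranspose_same B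
    rwa [hBpsd.1] at h1
  set U := (hρ.1.eigenvectorUnitary : Matrix n n ℂ) with hU
  set V := (hσ.1.eigenvectorUnitary : Matrix n n ℂ) with hV
  set W := (hMpsd.1.eigenvectorUnitary : Matrix n n ℂ) with hW
  set lam := hρ.1.eigenvalues with hlam
  set ν := hσ.1.eigenvalues with hν
  set μ := hMpsd.1.eigenvalues with hμ
  have hU1 : U * Uᴴ = 1 := unit_mul_star
  have hU2 : Uᴴ * U = 1 := star_mul_unit
  have hV1 : V * Vᴴ = 1 := unit_mul_star
  have hV2 : Vᴴ * V = 1 := star_mul_unit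
  have hW1 : W * Wᴴ = 1 := unit_mul_star
  have hW2 : Wᴴ * W = 1 := star_mul_unit
  have hP1a : (Wᴴ * V) * (Wᴴ * V)ᴴ = 1 := by
    rw [Matrix.conjTranspose_mul, Matrix.conjTranspose_conjTranspose, Matrix.mul_assoc,
      ← Matrix.mul_assoc V, hV1, Matrix.one_mul, hW2]
  have hP2a : (Uᴴ * V) * (Uᴴ * V)ᴴ = 1 := by
    rw [Matrix.conjTranspose_mul, Matrix.conjTranspose_conjTranspose, Matrix.mul_assoc,
      ← Matrix.mul_assoc V, hV1, Matrix.one_mul, hU2]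
  have hP2b : (Uᴴ * V)ᴴ * (Uᴴ * V) = 1 := by
    rw [Matrix.conjTranspose_mul, Matrix.conjTranspose_conjTranspose, Matrix.mul_assoc,
      ← Matrix.mul_assoc U, hU1, Matrix.one_mul, hV2]
  have sum_ν : ∑ j, ν j = 1 := by
    have h1 := trace_eq_sum_eig hσ.1
    rw [hσtr] at h1
    exact_mod_cast h1.symm
  have sum_lam : ∑ i, lam i = 1 := by
    have h1 := trace_eq_sum_eig hρ.1
    rw [htr] at h1
    exact_mod_cast h1.symm
  -- the cross trace computed in two frames
  have frameA : (M * mrpow σ ((z - 1) / z)).trace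
      = ((∑ i, ∑ j, μ i * ν j ^ ((z - 1) / z) * Complex.normSq ((Wᴴ * V) i j) : ℝ) : ℂ) := by
    conv_lhs => rw [spectral' hMpsd.1, mrpow_eq hσ.1]
    exact frame_trace W V hW1 hW2 _ _
  have frameB : (M * mrpow σ ((z - 1) / z)).trace
      = ((∑ i, ∑ j, lam i ^ q * (ν j ^ p * ν j ^ ((z - 1) / z) * ν j ^ p)
          * Complex.normSq ((Uᴴ * V) i j) : ℝ) : ℂ) := by
    have hstep : (M * mrpow σ ((z - 1) / z)).trace
        = (A' * (B * mrpow σ ((z - 1) / z) * B)).trace := by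
      rw [hM, Matrix.mul_assoc (B * A') B]
      rw [Matrix.trace_mul_cycle B A' (B * mrpow σ ((z - 1) / z))]
      rw [Matrix.trace_mul_cycle (B * mrpow σ ((z - 1) / z)) B A']
      rw [Matrix.mul_assoc]
    have hBcB : B * mrpow σ ((z - 1) / z) * B
        = V * Matrix.diagonal (fun j => ((ν j ^ p * ν j ^ ((z - 1) / z) * ν j ^ p : ℝ) : ℂ)) * Vᴴ := by
      rw [hB, mrpow_eq hσ.1 p, mrpow_eq hσ.1 ((z - 1) / z), UDU_mul V hV2, UDU_mul V hV2]
      congr 1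
      congr 1
      funext j
      push_cast
      ring
    rw [hstep, hBcB, hA', mrpow_eq hρ.1 q]
    exact frame_trace U V hU1 hU2 _ _
  -- kernel property
  have hker : ∀ j, ν j = 0 → ∀ i, μ i * Complex.normSq ((Wᴴ * V) i j) = 0 := by
    intro j hj
    have e1 : (Vᴴ * M * V) j j
        = ((∑ i, μ i * Complex.normSq ((Wᴴ * V) i j) : ℝ) : ℂ) := by
      have h1 : Vᴴ * M * V = (Wᴴ * V)ᴴ * Matrix.diagonal (fun i => ((μ i : ℝ) : ℂ)) * (Wᴴ * V) := by
        conv_lhs => rw [spectral' hMpsd.1]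
        rw [Matrix.conjTranspose_mul, Matrix.conjTranspose_conjTranspose]
        simp only [Matrix.mul_assoc]
        rfl
      rw [h1, diag_entry]
    have e2 : (Vᴴ * M * V) j j = 0 := by
      have hVB : Vᴴ * B = Matrix.diagonal (fun j => ((ν j ^ p : ℝ) : ℂ)) * Vᴴ := by
        rw [hB, mrpow_eq hσ.1, ← Matrix.mul_assoc, ← Matrix.mul_assoc, hV2, Matrix.one_mul]
      have hBV : B * V = V * Matrix.diagonal (fun j => ((ν j ^ p : ℝ) : ℂ)) := by
        rw [hB, mrpow_eq hσ.1, Matrix.mul_assoc, hV2, Matrix.mul_one]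
      have h2 : Vᴴ * M * V = Matrix.diagonal (fun j => ((ν j ^ p : ℝ) : ℂ))
          * (Vᴴ * A' * V) * Matrix.diagonal (fun j => ((ν j ^ p : ℝ) : ℂ)) := by
        calc Vᴴ * M * V = (Vᴴ * B) * A' * (B * V) := by
              rw [hM]; simp only [Matrix.mul_assoc]
          _ = (Matrix.diagonal (fun j => ((ν j ^ p : ℝ) : ℂ)) * Vᴴ) * A'
              * (V * Matrix.diagonal (fun j => ((ν j ^ p : ℝ) : ℂ))) := by rw [hVB, hBV]
          _ = Matrix.diagonal (fun j => ((ν j ^ p : ℝ) : ℂ))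
              * (Vᴴ * A' * V) * Matrix.diagonal (fun j => ((ν j ^ p : ℝ) : ℂ)) := by
              simp only [Matrix.mul_assoc]
      rw [h2]
      simp only [Matrix.mul_diagonal, Matrix.diagonal_mul]
      rw [hj, Real.zero_rpow hp0.ne']
      push_cast
      ring
    have e3 : ((∑ i, μ i * Complex.normSq ((Wᴴ * V) i j) : ℝ) : ℂ) = 0 := by
      rw [← e1, e2]
    have e4 : (∑ i, μ i * Complex.normSq ((Wᴴ * V) i j) : ℝ) = 0 := by exact_mod_cast e3
    intro i
    have := (Finset.sum_eq_zero_iff_of_nonneg (fun i _ =>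
      mul_nonneg (hMpsd.eigenvalues_nonneg i) (Complex.normSq_nonneg _))).mp e4
    exact this i (Finset.mem_univ i)
  -- real quantities
  have treal_eq : (∑ i, ∑ j, μ i * ν j ^ ((z - 1) / z) * Complex.normSq ((Wᴴ * V) i j))
      = ∑ i, ∑ j, lam i ^ q * (ν j ^ p * ν j ^ ((z - 1) / z) * ν j ^ p)
          * Complex.normSq ((Uᴴ * V) i j) := by
    have := frameA.symm.trans frameB
    exact_mod_cast this
  -- Step 3 : second frame sum ≤ 1
  have step3 : (∑ i, ∑ j, lam i ^ q * (ν j ^ p * ν j ^ ((z - 1) / z) * ν j ^ p)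
      * Complex.normSq ((Uᴴ * V) i j)) ≤ 1 := by
    have hterm : ∀ i j, lam i ^ q * (ν j ^ p * ν j ^ ((z - 1) / z) * ν j ^ p)
        * Complex.normSq ((Uᴴ * V) i j)
        ≤ (q * lam i + (z - α) / z * ν j) * Complex.normSq ((Uᴴ * V) i j) := by
      intro i j
      rcases eq_or_lt_of_le (show (0:ℝ) ≤ ν j from hσ.eigenvalues_nonneg j) with hj | hj
      · have hL : lam i ^ q * (ν j ^ p * ν j ^ ((z - 1) / z) * ν j ^ p)
            * Complex.normSq ((Uᴴ * V) i j) = 0 := by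
          rw [← hj, Real.zero_rpow hp0.ne']; ring
        rw [hL]
        exact mul_nonneg (add_nonneg (mul_nonneg hq0.le (hρ.eigenvalues_nonneg i))
          (mul_nonneg hrr0 (le_of_eq hj))) (Complex.normSq_nonneg _)
      · have hg : ν j ^ p * ν j ^ ((z - 1) / z) * ν j ^ p = ν j ^ ((z - α) / z) := by
          rw [← Real.rpow_add hj, ← Real.rpow_add hj]
          congr 1
          rw [hp]
          field_simp
          ring
        rw [hg]
        refine mul_le_mul_of_nonneg_right ?_ (Complex.normSq_nonneg _)
        exact Real.geom_mean_le_arith_mean2_weighted hq0.le hrr0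
          (hρ.eigenvalues_nonneg i) hj.le hqrr
    calc (∑ i, ∑ j, lam i ^ q * (ν j ^ p * ν j ^ ((z - 1) / z) * ν j ^ p)
        * Complex.normSq ((Uᴴ * V) i j))
        ≤ ∑ i, ∑ j, (q * lam i + (z - α) / z * ν j) * Complex.normSq ((Uᴴ * V) i j) :=
          Finset.sum_le_sum fun i _ => Finset.sum_le_sum fun j _ => hterm i j
      _ = q * (∑ i, lam i * (∑ j, Complex.normSq ((Uᴴ * V) i j)))
          + (z - α) / z * (∑ j, ν j * (∑ i, Complex.normSq ((Uᴴ * V) i j))) := by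
          have e : ∀ i j, (q * lam i + (z - α) / z * ν j) * Complex.normSq ((Uᴴ * V) i j)
              = q * (lam i * Complex.normSq ((Uᴴ * V) i j))
                + (z - α) / z * (ν j * Complex.normSq ((Uᴴ * V) i j)) := fun i j => by ring
          simp only [e, Finset.sum_add_distrib, ← Finset.mul_sum]
          congr 1
          congr 1
          rw [Finset.sum_comm]
          exact Finset.sum_congr rfl fun j _ => (Finset.mul_sum _ _ _).symm
      _ = 1 := by
          have h1 : ∀ i, (∑ j, Complex.normSq ((Uᴴ * V) i j)) = 1 := row_sum hP2a
          have h2 : ∀ j, (∑ i, Complex.normSq ((Uᴴ * V) i j)) = 1 := col_sum hP2b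
          simp only [h1, h2, mul_one]
          rw [sum_lam, sum_ν, mul_one, mul_one, hqrr]
  -- Step 1 : Klein inequality
  have step1 : (∑ i, μ i ^ z)
      ≤ (1 - z) + z * (∑ i, ∑ j, μ i * ν j ^ ((z - 1) / z)
          * Complex.normSq ((Wᴴ * V) i j)) := by
    have lhs_eq : (∑ i, μ i ^ z)
        = ∑ i, ∑ j, Complex.normSq ((Wᴴ * V) i j) * μ i ^ z := by
      refine Finset.sum_congr rfl fun i _ => ?_
      rw [← Finset.sum_mul, row_sum hP1a, one_mul]
    have hterm : ∀ i j, Complex.normSq ((Wᴴ * V) i j) * μ i ^ z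
        ≤ Complex.normSq ((Wᴴ * V) i j)
          * ((1 - z) * ν j + z * (μ i * ν j ^ ((z - 1) / z))) := by
      intro i j
      rcases eq_or_lt_of_le (show (0:ℝ) ≤ ν j from hσ.eigenvalues_nonneg j) with hj | hj
      · have h0' := hker j hj.symm i
        rcases mul_eq_zero.mp h0' with hμ0 | hn0
        · rw [hμ0, Real.zero_rpow hz0.ne', ← hj, Real.zero_rpow hc0]
          simp
        · rw [hn0]
          simp
      · exact mul_le_mul_of_nonneg_left
          (klein_scalar (hMpsd.eigenvalues_nonneg i) hj hz0 hz1) (Complex.normSq_nonneg _)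
    calc (∑ i, μ i ^ z)
        = ∑ i, ∑ j, Complex.normSq ((Wᴴ * V) i j) * μ i ^ z := lhs_eq
      _ ≤ ∑ i, ∑ j, Complex.normSq ((Wᴴ * V) i j)
            * ((1 - z) * ν j + z * (μ i * ν j ^ ((z - 1) / z))) :=
          Finset.sum_le_sum fun i _ => Finset.sum_le_sum fun j _ => hterm i j
      _ = (1 - z) * (∑ j, ν j * (∑ i, Complex.normSq ((Wᴴ * V) i j)))
          + z * (∑ i, ∑ j, μ i * ν j ^ ((z - 1) / z) * Complex.normSq ((Wᴴ * V) i j)) := by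
          have e : ∀ i j, Complex.normSq ((Wᴴ * V) i j)
                * ((1 - z) * ν j + z * (μ i * ν j ^ ((z - 1) / z)))
              = (1 - z) * (ν j * Complex.normSq ((Wᴴ * V) i j))
                + z * (μ i * ν j ^ ((z - 1) / z) * Complex.normSq ((Wᴴ * V) i j)) :=
            fun i j => by ring
          simp only [e, Finset.sum_add_distrib, ← Finset.mul_sum]
          congr 1
          congr 1
          rw [Finset.sum_comm]
          exact Finset.sum_congr rfl fun j _ => (Finset.mul_sum _ _ _).symm
      _ = (1 - z) + z * (∑ i, ∑ j, μ i * ν j ^ ((z - 1) / z)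
            * Complex.normSq ((Wᴴ * V) i j)) := by
          have h2 : ∀ j, (∑ i, Complex.normSq ((Wᴴ * V) i j)) = 1 := by
            intro j
            refine col_sum ?_ j
            rw [Matrix.conjTranspose_mul, Matrix.conjTranspose_conjTranspose, Matrix.mul_assoc,
              ← Matrix.mul_assoc W, hW1, Matrix.one_mul, hV2]
          simp only [h2, mul_one]
          rw [sum_ν, mul_one]
  -- conclude
  rw [treal_eq] at step1
  have main : (∑ i, μ i ^ z) ≤ 1 := by
    calc (∑ i, μ i ^ z) ≤ (1 - z) + z * (∑ i, ∑ j, lam i ^ q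
          * (ν j ^ p * ν j ^ ((z - 1) / z) * ν j ^ p) * Complex.normSq ((Uᴴ * V) i j)) := step1
      _ ≤ (1 - z) + z * 1 := by
          have := mul_le_mul_of_nonneg_left step3 hz0.le
          linarith
      _ = 1 := by ring
  have hfr : (mrpow M z).trace = ((∑ i, μ i ^ z : ℝ) : ℂ) := trace_mrpow hMpsd.1 z
  rw [hfr]
  calc ((∑ i, μ i ^ z : ℝ) : ℂ) ≤ ((1 : ℝ) : ℂ) := Complex.real_le_real.mpr main
    _ = 1 := Complex.ofReal_one
end

section
/- The measure M^R_{α,z} is symmetric under α ↦ 1-α: for any density matrix ρ, f_{α,z}(ρ, ρ*) = f_{1-α,z}(ρ, ρ*), hence M^R_{α,z}(ρ) = M^R_{1-α,z}(ρ). -/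
open Matrix ComplexOrder Kronecker

namespace StmtAux

open Polynomial

variable {n : Type*} [Fintype n] [DecidableEq n]

/-- Conjugation by a unitary matrix, as an algebra homomorphism. -/
noncomputable def conjAH (U : Matrix.unitaryGroup n ℂ) : Matrix n n ℂ →ₐ[ℂ] Matrix n n ℂ where
  toFun M := (U : Matrix n n ℂ) * M * star (U : Matrix n n ℂ)
  map_one' := by
    show (U : Matrix n n ℂ) * 1 * star (U : Matrix n n ℂ) = 1
    rw [mul_one]
    exact Matrix.mem_unitaryGroup_iff.mp U.2
  map_mul' M N := by
    have h : star (U : Matrix n n ℂ) * (U : Matrix n n ℂ) = 1 :=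
      Matrix.UnitaryGroup.star_mul_self U
    show (U : Matrix n n ℂ) * (M * N) * star (U : Matrix n n ℂ) =
      ((U : Matrix n n ℂ) * M * star (U : Matrix n n ℂ)) *
        ((U : Matrix n n ℂ) * N * star (U : Matrix n n ℂ))
    calc (U : Matrix n n ℂ) * (M * N) * star (U : Matrix n n ℂ)
        = (U : Matrix n n ℂ) * M * (star (U : Matrix n n ℂ) * (U : Matrix n n ℂ)) *
            (N * star (U : Matrix n n ℂ)) := by rw [h]; simp only [mul_one, mul_assoc]
      _ = ((U : Matrix n n ℂ) * M * star (U : Matrix n n ℂ)) *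
            ((U : Matrix n n ℂ) * N * star (U : Matrix n n ℂ)) := by
          simp only [mul_assoc]
  map_zero' := by simp
  map_add' M N := by
    show (U : Matrix n n ℂ) * (M + N) * star (U : Matrix n n ℂ) = _
    rw [mul_add, add_mul]
  commutes' c := by
    show (U : Matrix n n ℂ) * algebraMap ℂ (Matrix n n ℂ) c * star (U : Matrix n n ℂ) = _
    rw [Algebra.algebraMap_eq_smul_one, mul_smul_comm, mul_one, smul_mul_assoc,
      Matrix.mem_unitaryGroup_iff.mp U.2]

lemma aeval_conj (U : Matrix.unitaryGroup n ℂ) (D : Matrix n n ℂ) (q : ℂ[X]) :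
    aeval ((U : Matrix n n ℂ) * D * star (U : Matrix n n ℂ)) q =
      (U : Matrix n n ℂ) * aeval D q * star (U : Matrix n n ℂ) :=
  (aeval_algHom_apply (conjAH U) D q)

lemma aeval_diagonal (d : n → ℂ) (q : ℂ[X]) :
    aeval (Matrix.diagonal d) q = Matrix.diagonal (fun i => q.eval (d i)) := by
  have h := aeval_algHom_apply (Matrix.diagonalAlgHom (R := ℂ) (α := ℂ) (n := n)) d q
  simp only [Matrix.diagonalAlgHom_apply] at h
  rw [h]
  have h3 : (aeval d) q = fun i => q.eval (d i) := by
    funext i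
    have h2 := aeval_algHom_apply (Pi.evalAlgHom ℂ (fun _ : n => ℂ) i) d q
    simp only [Pi.evalAlgHom_apply] at h2
    rw [← h2, coe_aeval_eq_eval]
  rw [h3]

end StmtAux

namespace StmtAux

open Polynomial

variable {n : Type*} [Fintype n] [DecidableEq n]

lemma eval_map_ofReal (p : ℝ[X]) (x : ℝ) :
    (p.map (algebraMap ℝ ℂ)).eval ((x : ℝ) : ℂ) = ((p.eval x : ℝ) : ℂ) := by
  have : ((x : ℝ) : ℂ) = algebraMap ℝ ℂ x := rfl
  rw [this, Polynomial.eval_map, Polynomial.eval₂_hom]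
  rfl

lemma unitary_conj_mul (U : Matrix.unitaryGroup n ℂ) (D E : Matrix n n ℂ) :
    ((U : Matrix n n ℂ) * D * star (U : Matrix n n ℂ)) *
      ((U : Matrix n n ℂ) * E * star (U : Matrix n n ℂ)) =
      (U : Matrix n n ℂ) * (D * E) * star (U : Matrix n n ℂ) :=
  ((conjAH U).map_mul D E).symm

lemma mrpow_eq_aeval {A : Matrix n n ℂ} (hA : A.IsHermitian) (r : ℝ) (p : ℝ[X])
    (hp : ∀ i, p.eval (hA.eigenvalues i) = hA.eigenvalues i ^ r) :
    mrpow A r = aeval A (p.map (algebraMap ℝ ℂ)) := by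
  conv_rhs => rw [hA.spectral_theorem]
  rw [show Unitary.conjStarAlgAut ℂ (Matrix n n ℂ) hA.eigenvectorUnitary
      (Matrix.diagonal (RCLike.ofReal ∘ hA.eigenvalues)) =
      (Matrix.IsHermitian.eigenvectorUnitary hA : Matrix n n ℂ) *
      Matrix.diagonal (fun i => ((hA.eigenvalues i : ℝ) : ℂ)) *
      star (Matrix.IsHermitian.eigenvectorUnitary hA : Matrix n n ℂ) from rfl,
    aeval_conj, aeval_diagonal, mrpow, dif_pos hA]
  have hfg : (fun i => ((hA.eigenvalues i ^ r : ℝ) : ℂ)) =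
      fun i => (p.map (algebraMap ℝ ℂ)).eval ((hA.eigenvalues i : ℝ) : ℂ) :=
    funext fun i => by rw [eval_map_ofReal, hp i]
  rw [hfg]

lemma mrpow_decomp (V : Matrix.unitaryGroup n ℂ) (d : n → ℝ) (r : ℝ) :
    mrpow ((V : Matrix n n ℂ) * Matrix.diagonal (fun i => ((d i : ℝ) : ℂ)) *
        star (V : Matrix n n ℂ)) r
      = (V : Matrix n n ℂ) * Matrix.diagonal (fun i => (((d i : ℝ) ^ r : ℝ) : ℂ)) *
        star (V : Matrix n n ℂ) := by
  set M := (V : Matrix n n ℂ) * Matrix.diagonal (fun i => ((d i : ℝ) : ℂ)) *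
    star (V : Matrix n n ℂ) with hMdef
  have hdiag : (Matrix.diagonal (fun i => ((d i : ℝ) : ℂ))).IsHermitian := by
    apply Matrix.isHermitian_diagonal_of_self_adjoint
    funext i
    simp [Complex.conj_ofReal]
  have hM : M.IsHermitian :=
    Matrix.isHermitian_mul_mul_conjTranspose _ hdiag
  classical
  set s : Finset ℝ := Finset.image d Finset.univ ∪ Finset.image hM.eigenvalues Finset.univ
    with hs
  set p : ℝ[X] := Lagrange.interpolate s id (fun x => x ^ r) with hpdef
  have hnode : ∀ x ∈ s, p.eval x = x ^ r := fun x hx =>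
    Lagrange.eval_interpolate_at_node (fun x => x ^ r) (Set.injOn_id _) hx
  have h1 : mrpow M r = aeval M (p.map (algebraMap ℝ ℂ)) :=
    mrpow_eq_aeval hM r p (fun i => hnode _
      (Finset.mem_union_right _ (Finset.mem_image_of_mem _ (Finset.mem_univ i))))
  rw [h1, hMdef, aeval_conj, aeval_diagonal]
  have hfg : (fun i => (p.map (algebraMap ℝ ℂ)).eval ((d i : ℝ) : ℂ)) =
      fun i => (((d i : ℝ) ^ r : ℝ) : ℂ) := funext fun i => by
    rw [eval_map_ofReal, hnode _ (Finset.mem_union_left _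
      (Finset.mem_image_of_mem _ (Finset.mem_univ i)))]
  rw [hfg]

lemma conjM_mul (A B : Matrix n n ℂ) : conjM (A * B) = conjM A * conjM B :=
  Matrix.map_mul

lemma conjM_one : conjM (1 : Matrix n n ℂ) = 1 := by
  simp [conjM]

lemma conjM_zero : conjM (0 : Matrix n n ℂ) = 0 := by
  ext i j; simp [conjM]

lemma star_conjM (A : Matrix n n ℂ) : star (conjM A) = conjM (star A) := by
  ext i j
  simp [conjM, Matrix.star_eq_conjTranspose, Matrix.conjTranspose_apply]

lemma conjM_conjM (A : Matrix n n ℂ) : conjM (conjM A) = A := by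
  ext i j; simp [conjM]

lemma isHermitian_conjM {A : Matrix n n ℂ} (hA : A.IsHermitian) : (conjM A).IsHermitian := by
  show (conjM A)ᴴ = conjM A
  rw [← Matrix.star_eq_conjTranspose, star_conjM, Matrix.star_eq_conjTranspose, hA]

lemma conjM_diagonal (v : n → ℂ) (hv : ∀ i, (starRingEnd ℂ) (v i) = v i) :
    conjM (Matrix.diagonal v) = Matrix.diagonal v := by
  rw [conjM, Matrix.diagonal_map (map_zero _)]
  exact congrArg Matrix.diagonal (funext hv)

lemma mrpow_isHermitian (A : Matrix n n ℂ) (r : ℝ) : (mrpow A r).IsHermitian := by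
  rw [mrpow]
  split_ifs with h
  · exact Matrix.isHermitian_mul_mul_conjTranspose _
      (Matrix.isHermitian_diagonal_of_self_adjoint _
        (funext fun i => Complex.conj_ofReal _))
  · exact Matrix.isHermitian_zero

lemma star_mrpow (A : Matrix n n ℂ) (r : ℝ) : star (mrpow A r) = mrpow A r :=
  mrpow_isHermitian A r

lemma trace_mrpow {A : Matrix n n ℂ} (hA : A.IsHermitian) (r : ℝ) :
    (mrpow A r).trace = ∑ i, ((hA.eigenvalues i ^ r : ℝ) : ℂ) := by
  rw [mrpow, dif_pos hA, Matrix.trace_mul_cycle,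
    Matrix.UnitaryGroup.star_mul_self, one_mul, Matrix.trace_diagonal]

lemma star_trace_mrpow (A : Matrix n n ℂ) (r : ℝ) :
    star ((mrpow A r).trace) = (mrpow A r).trace := by
  by_cases hA : A.IsHermitian
  · rw [trace_mrpow hA]
    have : star (∑ i, ((hA.eigenvalues i ^ r : ℝ) : ℂ)) =
        ∑ i, star ((hA.eigenvalues i ^ r : ℝ) : ℂ) := by
      exact map_sum (starRingEnd ℂ) _ _
    rw [this]
    congr 1
    funext i
    exact Complex.conj_ofReal _
  · rw [mrpow, dif_neg hA]
    simp

lemma trace_conjM (A : Matrix n n ℂ) : (conjM A).trace = star A.trace := by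
  show ∑ i, (conjM A).diag i = star (∑ i, A.diag i)
  rw [show (star (∑ i, A.diag i) : ℂ) = (starRingEnd ℂ) (∑ i, A.diag i) from rfl, map_sum]
  rfl

lemma conjM_mrpow (A : Matrix n n ℂ) (r : ℝ) : conjM (mrpow A r) = mrpow (conjM A) r := by
  by_cases hA : A.IsHermitian
  · have hU : conjM (hA.eigenvectorUnitary : Matrix n n ℂ) ∈ Matrix.unitaryGroup n ℂ := by
      rw [Matrix.mem_unitaryGroup_iff, star_conjM, ← conjM_mul,
        Matrix.mem_unitaryGroup_iff.mp (hA.eigenvectorUnitary).2, conjM_one]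
    have hconjA : conjM A = ((⟨_, hU⟩ : Matrix.unitaryGroup n ℂ) : Matrix n n ℂ) *
        Matrix.diagonal (fun i => ((hA.eigenvalues i : ℝ) : ℂ)) *
        star ((⟨_, hU⟩ : Matrix.unitaryGroup n ℂ) : Matrix n n ℂ) := by
      conv_lhs => rw [hA.spectral_theorem, Unitary.conjStarAlgAut_apply]
      rw [conjM_mul, conjM_mul, star_conjM,
        conjM_diagonal (RCLike.ofReal ∘ hA.eigenvalues) (fun i => RCLike.conj_ofReal _)]
      rfl
    rw [hconjA, mrpow_decomp ⟨_, hU⟩ hA.eigenvalues r, mrpow, dif_pos hA, conjM_mul,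
      conjM_mul, star_conjM, conjM_diagonal (fun i => ((hA.eigenvalues i ^ r : ℝ) : ℂ)) (fun i => Complex.conj_ofReal _)]
  · have h2 : ¬ (conjM A).IsHermitian := fun h => hA (by
      have := isHermitian_conjM h
      rwa [conjM_conjM] at this)
    rw [mrpow, dif_neg hA, mrpow, dif_neg h2, conjM_zero]

end StmtAux

namespace StmtAux

open Polynomial

variable {n : Type*} [Fintype n] [DecidableEq n]

lemma mrpow_add {A : Matrix n n ℂ} (hA : A.PosSemidef) {a b : ℝ} (hab : a + b ≠ 0) :
    mrpow A a * mrpow A b = mrpow A (a + b) := by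
  rw [mrpow, dif_pos hA.1, mrpow, dif_pos hA.1, mrpow, dif_pos hA.1,
    unitary_conj_mul, Matrix.diagonal_mul_diagonal]
  have hfg : (fun i => ((hA.1.eigenvalues i ^ a : ℝ) : ℂ) * ((hA.1.eigenvalues i ^ b : ℝ) : ℂ)) =
      fun i => ((hA.1.eigenvalues i ^ (a + b) : ℝ) : ℂ) := funext fun i => by
    rw [← Complex.ofReal_mul, ← Real.rpow_add' (hA.eigenvalues_nonneg i) hab]
  rw [hfg]

lemma mrpow_one {A : Matrix n n ℂ} (hA : A.PosSemidef) : mrpow A 1 = A := by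
  rw [mrpow, dif_pos hA.1]
  have hfg : (fun i => ((hA.1.eigenvalues i ^ (1 : ℝ) : ℝ) : ℂ)) =
      RCLike.ofReal ∘ hA.1.eigenvalues := funext fun i => by
    rw [Real.rpow_one]; rfl
  rw [hfg]; exact hA.1.spectral_theorem.symm

lemma mul_mrpow {A : Matrix n n ℂ} (hA : A.PosSemidef) {z : ℝ} (hz : z ≠ 0) :
    A * mrpow A (z - 1) = mrpow A z := by
  nth_rewrite 1 [← mrpow_one hA]
  rw [mrpow_add hA (a := 1) (b := z - 1) (by simpa using hz)]
  norm_num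

lemma pow_intertwine (X : Matrix n n ℂ) (k : ℕ) :
    (X * star X) ^ k * X = X * (star X * X) ^ k := by
  induction k with
  | zero => simp
  | succ k ih =>
    rw [pow_succ, pow_succ]
    calc (X * star X) ^ k * (X * star X) * X
        = ((X * star X) ^ k * X) * (star X * X) := by
          simp only [mul_assoc]
      _ = X * ((star X * X) ^ k * (star X * X)) := by
          rw [ih]; simp only [mul_assoc]

lemma aeval_intertwine (X : Matrix n n ℂ) (q : ℂ[X]) :
    aeval (X * star X) q * X = X * aeval (star X * X) q := by
  induction q using Polynomial.induction_on' with
  | add p q hp hq => rw [map_add, map_add, add_mul, mul_add, hp, hq]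
  | monomial k c =>
    rw [aeval_monomial, aeval_monomial]
    calc algebraMap ℂ (Matrix n n ℂ) c * (X * star X) ^ k * X
        = algebraMap ℂ (Matrix n n ℂ) c * ((X * star X) ^ k * X) := by
          rw [mul_assoc]
      _ = algebraMap ℂ (Matrix n n ℂ) c * (X * (star X * X) ^ k) := by
          rw [pow_intertwine]
      _ = (algebraMap ℂ (Matrix n n ℂ) c * X) * (star X * X) ^ k := by
          rw [mul_assoc]
      _ = (X * algebraMap ℂ (Matrix n n ℂ) c) * (star X * X) ^ k := by
          rw [Algebra.commutes]
      _ = X * (algebraMap ℂ (Matrix n n ℂ) c * (star X * X) ^ k) := by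
          rw [mul_assoc]

lemma trace_mrpow_mul_star (X : Matrix n n ℂ) {z : ℝ} (hz : z ≠ 0) :
    (mrpow (X * star X) z).trace = (mrpow (star X * X) z).trace := by
  classical
  have hB : (X * star X).PosSemidef := Matrix.posSemidef_self_mul_conjTranspose X
  have hA : (star X * X).PosSemidef := Matrix.posSemidef_conjTranspose_mul_self X
  set s : Finset ℝ := Finset.image hB.1.eigenvalues Finset.univ ∪
    Finset.image hA.1.eigenvalues Finset.univ with hs
  set p : ℝ[X] := Lagrange.interpolate s id (fun x => x ^ (z - 1)) with hpdef
  have hnode : ∀ x ∈ s, p.eval x = x ^ (z - 1) := fun x hx =>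
    Lagrange.eval_interpolate_at_node (fun x => x ^ (z - 1)) (Set.injOn_id _) hx
  set q : ℂ[X] := p.map (algebraMap ℝ ℂ) with hq
  have h1 : mrpow (X * star X) (z - 1) = aeval (X * star X) q :=
    mrpow_eq_aeval hB.1 _ p (fun i => hnode _
      (Finset.mem_union_left _ (Finset.mem_image_of_mem _ (Finset.mem_univ i))))
  have h2 : mrpow (star X * X) (z - 1) = aeval (star X * X) q :=
    mrpow_eq_aeval hA.1 _ p (fun i => hnode _
      (Finset.mem_union_right _ (Finset.mem_image_of_mem _ (Finset.mem_univ i))))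
  calc (mrpow (X * star X) z).trace
      = ((X * star X) * mrpow (X * star X) (z - 1)).trace := by rw [mul_mrpow hB hz]
    _ = (X * (star X * aeval (X * star X) q)).trace := by rw [h1, mul_assoc]
    _ = ((star X * aeval (X * star X) q) * X).trace := Matrix.trace_mul_comm _ _
    _ = (star X * (aeval (X * star X) q * X)).trace := by rw [mul_assoc]
    _ = (star X * (X * aeval (star X * X) q)).trace := by rw [aeval_intertwine]
    _ = ((star X * X) * mrpow (star X * X) (z - 1)).trace := by rw [h2, ← mul_assoc]
    _ = (mrpow (star X * X) z).trace := by rw [mul_mrpow hA hz]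

end StmtAux


theorem stmt10 {n : Type*} [Fintype n] [DecidableEq n] (ρ : Matrix n n ℂ)
    (hρ : ρ.PosSemidef) (htr : ρ.trace = 1)
    (α z : ℝ) (h0 : 0 < max α (1 - α)) (hz : max α (1 - α) ≤ z) (hz1 : z < 1) :
    fRenyi α z ρ (conjM ρ) = fRenyi (1 - α) z ρ (conjM ρ) ∧
      1 - fRenyi α z ρ (conjM ρ) = 1 - fRenyi (1 - α) z ρ (conjM ρ) := by
  open StmtAux in
  have hz0 : 0 < z := lt_of_lt_of_le h0 hz
  have hzne : z ≠ 0 := ne_of_gt hz0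
  have hα0 : 0 < α := by
    have h1 := le_trans (le_max_right α (1 - α)) hz; linarith
  have hα1 : α < 1 := by
    have h1 := le_trans (le_max_left α (1 - α)) hz; linarith
  have hσ : (conjM ρ).PosSemidef := by
    have ht : conjM ρ = ρᵀ := by
      ext i j
      have h := congrFun (congrFun hρ.1 i) j
      rw [Matrix.conjTranspose_apply] at h
      simp only [conjM, Matrix.map_apply, Matrix.transpose_apply]
      rw [← h]
      simp
    rw [ht]; exact hρ.transpose
  suffices key : fRenyi α z ρ (conjM ρ) = fRenyi (1 - α) z ρ (conjM ρ) by
    exact ⟨key, by rw [key]⟩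
  set Y : Matrix n n ℂ :=
    mrpow ρ ((1 - α) / (2 * z)) * mrpow (conjM ρ) (α / (2 * z)) with hY
  have hstarY : star Y =
      mrpow (conjM ρ) (α / (2 * z)) * mrpow ρ ((1 - α) / (2 * z)) := by
    rw [hY, StarMul.star_mul, star_mrpow, star_mrpow]
  have hmidσ : mrpow (conjM ρ) (α / (2 * z)) * mrpow (conjM ρ) (α / (2 * z)) =
      mrpow (conjM ρ) (α / z) := by
    have hsum : α / (2 * z) + α / (2 * z) = α / z := by field_simp; ring
    rw [mrpow_add hσ (by rw [hsum]; exact ne_of_gt (by positivity)), hsum]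
  have hmidρ : mrpow ρ ((1 - α) / (2 * z)) * mrpow ρ ((1 - α) / (2 * z)) =
      mrpow ρ ((1 - α) / z) := by
    have hsum : (1 - α) / (2 * z) + (1 - α) / (2 * z) = (1 - α) / z := by
      field_simp; ring
    have h1α : 0 < 1 - α := by linarith
    rw [mrpow_add hρ (by rw [hsum]; exact ne_of_gt (by positivity)), hsum]
  have hYY : Y * star Y = mrpow ρ ((1 - α) / (2 * z)) * mrpow (conjM ρ) (α / z) *
      mrpow ρ ((1 - α) / (2 * z)) := by
    rw [hY, hstarY]
    calc (mrpow ρ ((1 - α) / (2 * z)) * mrpow (conjM ρ) (α / (2 * z))) *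
          (mrpow (conjM ρ) (α / (2 * z)) * mrpow ρ ((1 - α) / (2 * z)))
        = mrpow ρ ((1 - α) / (2 * z)) * ((mrpow (conjM ρ) (α / (2 * z)) *
            mrpow (conjM ρ) (α / (2 * z))) * mrpow ρ ((1 - α) / (2 * z))) := by
          simp only [mul_assoc]
      _ = _ := by rw [hmidσ]; simp only [mul_assoc]
  have hYY' : star Y * Y = mrpow (conjM ρ) (α / (2 * z)) * mrpow ρ ((1 - α) / z) *
      mrpow (conjM ρ) (α / (2 * z)) := by
    rw [hY, hstarY]
    calc (mrpow (conjM ρ) (α / (2 * z)) * mrpow ρ ((1 - α) / (2 * z))) *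
          (mrpow ρ ((1 - α) / (2 * z)) * mrpow (conjM ρ) (α / (2 * z)))
        = mrpow (conjM ρ) (α / (2 * z)) * ((mrpow ρ ((1 - α) / (2 * z)) *
            mrpow ρ ((1 - α) / (2 * z))) * mrpow (conjM ρ) (α / (2 * z))) := by
          simp only [mul_assoc]
      _ = _ := by rw [hmidρ]; simp only [mul_assoc]
  have hstep : star (fRenyi α z ρ (conjM ρ)) = fRenyi (1 - α) z ρ (conjM ρ) := by
    rw [fRenyi, ← trace_conjM, conjM_mrpow, conjM_mul, conjM_mul, conjM_mrpow,
      conjM_mrpow, conjM_conjM]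
    have e1 : (1 - (1 - α)) / (2 * z) = α / (2 * z) := by ring_nf
    rw [show mrpow ρ ((1 - α) / (2 * z)) * mrpow (conjM ρ) (α / z) *
        mrpow ρ ((1 - α) / (2 * z)) = Y * star Y from hYY.symm,
      trace_mrpow_mul_star Y hzne, hYY', fRenyi, e1]
  have hreal : star (fRenyi (1 - α) z ρ (conjM ρ)) = fRenyi (1 - α) z ρ (conjM ρ) := by
    rw [fRenyi]; exact star_trace_mrpow _ _
  calc fRenyi α z ρ (conjM ρ) = star (star (fRenyi α z ρ (conjM ρ))) := (star_star _).symm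
    _ = star (fRenyi (1 - α) z ρ (conjM ρ)) := by rw [hstep]
    _ = fRenyi (1 - α) z ρ (conjM ρ) := hreal
end

section
/- For positive definite density matrices δ and λ ∈ (0,1), Tr[δ ♯_λ δ*] ≤ 1, where δ ♯_λ δ* = δ^{1/2}(δ^{-1/2} δ* δ^{-1/2})^λ δ^{1/2} is the weighted matrix geometric mean; consequently M^O_λ(δ) = 1 - Tr[δ ♯_λ δ*] ≥ 0. -/
open Matrix ComplexOrder Kronecker

section Aux

variable {n : Type*} [Fintype n] [DecidableEq n]

lemma mrpow_eq {A : Matrix n n ℂ} (hA : A.IsHermitian) (r : ℝ) :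
    mrpow A r = (hA.eigenvectorUnitary : Matrix n n ℂ) *
      Matrix.diagonal ((fun i => (((hA.eigenvalues i : ℝ) ^ r : ℝ) : ℂ)) : n → ℂ) *
      star (hA.eigenvectorUnitary : Matrix n n ℂ) := dif_pos hA

lemma conj_mul_conj (U : Matrix.unitaryGroup n ℂ) (D E : Matrix n n ℂ) :
    ((U : Matrix n n ℂ) * D * star (U : Matrix n n ℂ)) *
      ((U : Matrix n n ℂ) * E * star (U : Matrix n n ℂ)) =
    (U : Matrix n n ℂ) * (D * E) * star (U : Matrix n n ℂ) := by
  have h : (star (U : Matrix n n ℂ)) * (U : Matrix n n ℂ) = 1 :=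
    Matrix.UnitaryGroup.star_mul_self U
  have h2 : ∀ X : Matrix n n ℂ, star (U : Matrix n n ℂ) * ((U : Matrix n n ℂ) * X) = X :=
    fun X => by rw [← Matrix.mul_assoc, h, Matrix.one_mul]
  simp only [Matrix.mul_assoc, h2]

lemma posDef_conj_unit {A P : Matrix n n ℂ} (hA : A.PosDef) (hP : IsUnit P) :
    (P * A * Pᴴ).PosDef := by
  refine Matrix.posDef_iff_dotProduct_mulVec.mpr ⟨Matrix.isHermitian_mul_mul_conjTranspose _ hA.1, fun x hx => ?_⟩
  have hP' : IsUnit Pᴴ := by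
    rw [← Matrix.isUnit_conjTranspose] at hP; exact hP
  have hx' : Pᴴ *ᵥ x ≠ 0 := fun hc => hx <| by
    have := Matrix.mulVec_injective_iff_isUnit.mpr hP' (a₁ := x) (a₂ := 0)
    simp only [Matrix.mulVec_zero] at this
    exact this hc
  have key := hA.dotProduct_mulVec_pos hx'
  have : P * A * Pᴴ = (Pᴴ)ᴴ * A * Pᴴ := by rw [Matrix.conjTranspose_conjTranspose]
  rw [this]
  simpa only [Matrix.star_mulVec, Matrix.dotProduct_mulVec, Matrix.vecMul_vecMul] using key

lemma posDef_conj_diag (U : Matrix.unitaryGroup n ℂ) {d : n → ℝ} (hd : ∀ i, 0 < d i) :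
    ((U : Matrix n n ℂ) * Matrix.diagonal (fun i => ((d i : ℝ) : ℂ)) *
      star (U : Matrix n n ℂ)).PosDef := by
  rw [Matrix.star_eq_conjTranspose]
  exact posDef_conj_unit (Matrix.PosDef.diagonal fun i => Complex.zero_lt_real.mpr (hd i))
    ((Matrix.isUnit_iff_isUnit_det _).mpr (Matrix.UnitaryGroup.det_isUnit U))

lemma mrpow_posDef {A : Matrix n n ℂ} (hA : A.PosDef) (r : ℝ) : (mrpow A r).PosDef := by
  rw [mrpow_eq hA.1]
  exact posDef_conj_diag _ fun i => Real.rpow_pos_of_pos (hA.eigenvalues_pos i) r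

lemma mrpow_mul_mrpow {A : Matrix n n ℂ} (hA : A.PosDef) (r s : ℝ) :
    mrpow A r * mrpow A s = mrpow A (r + s) := by
  rw [mrpow_eq hA.1, mrpow_eq hA.1, mrpow_eq hA.1, conj_mul_conj,
    Matrix.diagonal_mul_diagonal]
  congr 2 with i j
  by_cases h : i = j
  · subst h
    simp [← Complex.ofReal_mul, ← Real.rpow_add (hA.eigenvalues_pos i)]
  · simp [Matrix.diagonal_apply_ne _ h]

lemma mrpow_zero {A : Matrix n n ℂ} (hA : A.IsHermitian) : mrpow A 0 = 1 := by
  rw [mrpow_eq hA]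
  simp only [Real.rpow_zero, Complex.ofReal_one, Matrix.diagonal_one, Matrix.mul_one]
  exact Matrix.mem_unitaryGroup_iff.mp hA.eigenvectorUnitary.2

lemma mrpow_one {A : Matrix n n ℂ} (hA : A.IsHermitian) : mrpow A 1 = A := by
  rw [mrpow_eq hA]
  simpa [Function.comp_def] using hA.spectral_theorem.symm

lemma psd_conj_diag (V : Matrix.unitaryGroup n ℂ) {d : n → ℂ} (hd : ∀ i, 0 ≤ d i) :
    ((V : Matrix n n ℂ) * Matrix.diagonal d * star (V : Matrix n n ℂ)).PosSemidef := by
  rw [Matrix.star_eq_conjTranspose]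
  exact (Matrix.PosSemidef.diagonal (by intro i; exact hd i)).mul_mul_conjTranspose_same _

lemma psd_trace_nonneg {M : Matrix n n ℂ} (hM : M.PosSemidef) : 0 ≤ M.trace := by
  rw [Matrix.trace]
  apply Finset.sum_nonneg
  intro i _
  have h := hM.dotProduct_mulVec_nonneg (Pi.single i 1)
  have hs : star (Pi.single i 1 : n → ℂ) = Pi.single i 1 := by
    funext j
    by_cases hij : j = i
    · subst hij; simp
    · simp [Pi.single_apply, hij]
  rw [hs, Matrix.mulVec_single, dotProduct] at h
  simpa [Pi.single_apply, Matrix.diag] using h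

lemma conj_smul (V : Matrix.unitaryGroup n ℂ) (c : ℝ) (d : n → ℂ) :
    c • ((V : Matrix n n ℂ) * Matrix.diagonal d * star (V : Matrix n n ℂ)) =
      (V : Matrix n n ℂ) * Matrix.diagonal (fun i => c • d i) * star (V : Matrix n n ℂ) := by
  rw [show Matrix.diagonal (fun i => c • d i) = c • Matrix.diagonal d from
    by rw [← Matrix.diagonal_smul]; rfl]
  rw [Matrix.mul_smul, Matrix.smul_mul]

lemma conj_add (V : Matrix.unitaryGroup n ℂ) (d e : n → ℂ) :
    (V : Matrix n n ℂ) * Matrix.diagonal d * star (V : Matrix n n ℂ) +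
      (V : Matrix n n ℂ) * Matrix.diagonal e * star (V : Matrix n n ℂ) =
    (V : Matrix n n ℂ) * Matrix.diagonal (fun i => d i + e i) * star (V : Matrix n n ℂ) := by
  rw [show Matrix.diagonal (fun i => d i + e i) = Matrix.diagonal d + Matrix.diagonal e from
    by rw [Matrix.diagonal_add]]
  rw [Matrix.mul_add, Matrix.add_mul]

lemma conj_sub (V : Matrix.unitaryGroup n ℂ) (d e : n → ℂ) :
    (V : Matrix n n ℂ) * Matrix.diagonal d * star (V : Matrix n n ℂ) -
      (V : Matrix n n ℂ) * Matrix.diagonal e * star (V : Matrix n n ℂ) =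
    (V : Matrix n n ℂ) * Matrix.diagonal (fun i => d i - e i) * star (V : Matrix n n ℂ) := by
  rw [show Matrix.diagonal (fun i => d i - e i) = Matrix.diagonal d - Matrix.diagonal e from
    by rw [Matrix.diagonal_sub]]
  rw [Matrix.mul_sub, Matrix.sub_mul]

lemma conjM_eq_transpose {A : Matrix n n ℂ} (hA : A.IsHermitian) : conjM A = Aᵀ := by
  ext i j
  exact hA.apply j i

lemma trace_conj_diag (V : Matrix.unitaryGroup n ℂ) (d : n → ℂ) :
    ((V : Matrix n n ℂ) * Matrix.diagonal d * star (V : Matrix n n ℂ)).trace = ∑ i, d i := by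
  rw [Matrix.trace_mul_cycle, Matrix.UnitaryGroup.star_mul_self,
    Matrix.one_mul, Matrix.trace_diagonal]

end Aux

theorem stmt17 {n : Type*} [Fintype n] [DecidableEq n] (δ : Matrix n n ℂ)
    (hδ : δ.PosDef) (htr : δ.trace = 1) (l : ℝ) (hl0 : 0 < l) (hl1 : l < 1) :
    (geomMean δ (conjM δ) l).trace ≤ 1 ∧ 0 ≤ 1 - (geomMean δ (conjM δ) l).trace := by
  set Q := mrpow δ (1/2) with hQdef
  set P := mrpow δ (-(1/2)) with hPdef
  set B := conjM δ with hBdef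
  set C := P * B * P with hCdef
  have hB : B.PosDef := by rw [hBdef, conjM_eq_transpose hδ.1]; exact hδ.transpose
  have hQ : Q.PosDef := mrpow_posDef hδ _
  have hP : P.PosDef := mrpow_posDef hδ _
  have hQP : Q * P = 1 := by
    rw [hQdef, hPdef, mrpow_mul_mrpow hδ, show (1/2 : ℝ) + -(1/2) = 0 by norm_num,
      mrpow_zero hδ.1]
  have hPQ : P * Q = 1 := by
    rw [hQdef, hPdef, mrpow_mul_mrpow hδ, show (-(1/2) : ℝ) + 1/2 = 0 by norm_num,
      mrpow_zero hδ.1]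
  have hQQ : Q * Q = δ := by
    rw [hQdef, mrpow_mul_mrpow hδ, show (1/2 : ℝ) + 1/2 = 1 by norm_num, mrpow_one hδ.1]
  have hC : C.PosDef := by
    have hthis : C = P * B * Pᴴ := by rw [hP.1.eq]
    rw [hthis]
    exact posDef_conj_unit hB hP.isUnit
  -- spectral data for C
  have hQCQ : Q * C * Q = B := by
    rw [hCdef, ← Matrix.mul_assoc, ← Matrix.mul_assoc, hQP, Matrix.one_mul, Matrix.mul_assoc,
      hPQ, Matrix.mul_one]
  set V := hC.1.eigenvectorUnitary with hVdef
  set μ := hC.1.eigenvalues with hμdef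
  have hμpos : ∀ i, 0 < μ i := hC.eigenvalues_pos
  have hCspec : C = (V : Matrix n n ℂ) * Matrix.diagonal (fun i => ((μ i : ℝ) : ℂ)) *
      star (V : Matrix n n ℂ) := hC.1.spectral_theorem
  have hone : (1 : Matrix n n ℂ) = (V : Matrix n n ℂ) * Matrix.diagonal (fun _ : n => (1 : ℂ)) *
      star (V : Matrix n n ℂ) := by
    rw [Matrix.diagonal_one, Matrix.mul_one]
    exact (Matrix.mem_unitaryGroup_iff.mp V.2).symm
  have hmr : mrpow C l = (V : Matrix n n ℂ) *
      Matrix.diagonal (fun i => (((μ i : ℝ) ^ l : ℝ) : ℂ)) * star (V : Matrix n n ℂ) :=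
    mrpow_eq hC.1 l
  -- the difference is PSD
  set E : Matrix n n ℂ := (1 - l) • (1 : Matrix n n ℂ) + l • C with hEdef
  have hdiff : E - mrpow C l = (V : Matrix n n ℂ) *
      Matrix.diagonal (fun i => (1 - l) • (1 : ℂ) + l • ((μ i : ℝ) : ℂ) - (((μ i) ^ l : ℝ) : ℂ)) *
      star (V : Matrix n n ℂ) := by
    rw [hEdef, hmr]
    conv_lhs => rw [hCspec, hone]
    rw [conj_smul, conj_smul, conj_add, conj_sub]
  have hentry : ∀ i, (0 : ℂ) ≤ (1 - l) • (1 : ℂ) + l • ((μ i : ℝ) : ℂ) - (((μ i) ^ l : ℝ) : ℂ) := by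
    intro i
    have hsc : (μ i) ^ l ≤ (1 - l) * 1 + l * (μ i) := by
      have := Real.geom_mean_le_arith_mean2_weighted (by linarith : (0:ℝ) ≤ 1 - l) hl0.le
        zero_le_one (hμpos i).le (by ring)
      simpa using this
    have : ((1 - l) • (1 : ℂ) + l • ((μ i : ℝ) : ℂ) - (((μ i) ^ l : ℝ) : ℂ)) =
        (((1 - l) * 1 + l * (μ i) - (μ i) ^ l : ℝ) : ℂ) := by
      push_cast [Complex.real_smul]
      ring
    rw [this]
    rw [Complex.zero_le_real]
    linarith
  have hDpsd : (E - mrpow C l).PosSemidef := by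
    rw [hdiff]; exact psd_conj_diag V hentry
  have hpsd2 : (Q * (E - mrpow C l) * Q).PosSemidef := by
    have : Q * (E - mrpow C l) * Q = Q * (E - mrpow C l) * Qᴴ := by rw [hQ.1.eq]
    rw [this]
    exact hDpsd.mul_mul_conjTranspose_same Q
  have htrE : (Q * E * Q).trace = 1 := by
    have hBtr : B.trace = 1 := by
      rw [hBdef, conjM_eq_transpose hδ.1, Matrix.trace_transpose, htr]
    rw [hEdef, Matrix.mul_add, Matrix.add_mul, Matrix.mul_smul, Matrix.smul_mul,
      Matrix.mul_smul, Matrix.smul_mul, Matrix.mul_one, hQQ, hQCQ, Matrix.trace_add,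
      Matrix.trace_smul, Matrix.trace_smul, htr, hBtr]
    simp [Complex.real_smul]
  have hkey : (Q * (E - mrpow C l) * Q).trace = 1 - (Q * mrpow C l * Q).trace := by
    rw [Matrix.mul_sub, Matrix.sub_mul, Matrix.trace_sub, htrE]
  have htr0 : (0 : ℂ) ≤ 1 - (Q * mrpow C l * Q).trace := by
    rw [← hkey]; exact psd_trace_nonneg hpsd2
  have hg : geomMean δ (conjM δ) l = Q * mrpow C l * Q := rfl
  rw [hg]
  exact ⟨by rwa [← sub_nonneg], htr0⟩
end
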